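/- arXiv:2107.05822 — 3 statements merged into one kernel-verified Lean document; each statement's English description precedes it below -/
import Mathlib

section
/- Let X_1, ..., X_n be random variables taking values in {0,1}, adapted to a filtration F_0 ⊆ F_1 ⊆ ... ⊆ F_n (with F_j = σ(X_1,...,X_j)). If almost surely ∑_{j=1}^n E[X_j | F_{j-1}] ≥ μ for some real μ ≥ 0, then Pr[∑_{j=1}^n X_j ≥ 1] ≥ 1 - exp(-3μ/8). -/
open MeasureTheory Finset Real

/-! With `p j = E[X j | ℱ (j - 1)]`, the process `W k = ∏_{j ≤ k} (1 - X j) · exp (∑_{j ≤ k} p j)`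
is a supermartingale: `E[1 - X (k + 1) | ℱ k] = 1 - p (k + 1)` and `(1 - q) e^q ≤ 1`.
On the event that every `X j` vanishes, `W n = exp (∑ p j) ≥ e^μ`; Markov's inequality and
`E[W n] ≤ W 0 = 1` bound its probability by `e^{-μ} ≤ e^{-3μ/8}`. -/

theorem one_sub_mul_exp_le_one (q : ℝ) : (1 - q) * exp q ≤ 1 :=
  calc (1 - q) * exp q ≤ exp (-q) * exp q := by gcongr; exact one_sub_le_exp_neg q
    _ = 1 := by rw [← exp_add, neg_add_cancel, exp_zero]

theorem prod_one_sub_eq_one_of_sum_lt_one {ι : Type*} {s : Finset ι} {f : ι → ℝ}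
    (hf : ∀ i ∈ s, f i = 0 ∨ f i = 1) (hsum : ∑ i ∈ s, f i < 1) : ∏ i ∈ s, (1 - f i) = 1 := by
  refine prod_eq_one fun i hi => ?_
  rcases hf i hi with h | h
  · rw [h, sub_zero]
  · have hnonneg : ∀ j ∈ s, 0 ≤ f j := fun j hj => by rcases hf j hj with h | h <;> simp [h]
    have := single_le_sum hnonneg hi
    linarith

theorem condExp_le_one {Ω : Type*} {m m0 : MeasurableSpace Ω} {P : Measure Ω} [IsFiniteMeasure P]
    {f : Ω → ℝ} (hm : m ≤ m0) (hf : Integrable f P) (hf1 : ∀ᵐ ω ∂P, f ω ≤ 1) :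
    ∀ᵐ ω ∂P, P[f | m] ω ≤ 1 := by
  have h := condExp_mono (m := m) hf (integrable_const (1 : ℝ)) hf1
  rwa [condExp_const hm] at h

section SurvivalProcess

variable {Ω : Type*} {m0 : MeasurableSpace Ω} {X A : ℕ → Ω → ℝ}

noncomputable def survivalProcess (X A : ℕ → Ω → ℝ) (k : ℕ) (ω : Ω) : ℝ :=
  (∏ j ∈ Icc 1 k, (1 - X j ω)) * exp (∑ j ∈ Icc 1 k, A j ω)

theorem survivalProcess_zero : survivalProcess X A 0 = 1 := by
  funext ω
  simp [survivalProcess]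

theorem survivalProcess_succ (k : ℕ) (ω : Ω) :
    survivalProcess X A (k + 1) ω
      = survivalProcess X A k ω * ((1 - X (k + 1) ω) * exp (A (k + 1) ω)) := by
  simp only [survivalProcess]
  rw [prod_Icc_succ_top (Nat.le_add_left 1 k), sum_Icc_succ_top (Nat.le_add_left 1 k), exp_add]
  ring

theorem adapted_survivalProcess {ℱ : Filtration ℕ m0} (hX : Adapted ℱ X) (hA : Adapted ℱ A) :
    Adapted ℱ (survivalProcess X A) := fun k => by
  have hle : ∀ j ∈ Icc 1 k, ℱ j ≤ ℱ k := fun j hj => ℱ.mono (mem_Icc.mp hj).2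
  refine Measurable.mul ?_ (measurable_exp.comp ?_)
  · exact measurable_fun_prod _ fun j hj => measurable_const.sub ((hX j).mono (hle j hj) le_rfl)
  · exact measurable_fun_sum _ fun j hj => (hA j).mono (hle j hj) le_rfl

theorem survivalProcess_nonneg {ω : Ω} (hX : ∀ j, X j ω ≤ 1) (k : ℕ) :
    0 ≤ survivalProcess X A k ω :=
  mul_nonneg (prod_nonneg fun j _ => sub_nonneg.mpr (hX j)) (exp_pos _).le

theorem survivalProcess_le_exp {ω : Ω} (hX : ∀ j, X j ω ∈ Set.Icc 0 1) (hA : ∀ j, A j ω ≤ 1)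
    (k : ℕ) : survivalProcess X A k ω ≤ exp k := by
  have hprod : ∏ j ∈ Icc 1 k, (1 - X j ω) ≤ 1 :=
    prod_le_one (fun j _ => sub_nonneg.mpr (hX j).2) fun j _ => by linarith [(hX j).1]
  have hsum : ∑ j ∈ Icc 1 k, A j ω ≤ k := by
    simpa using sum_le_sum fun j (_ : j ∈ Icc 1 k) => hA j
  calc survivalProcess X A k ω ≤ 1 * exp k := by
        unfold survivalProcess
        gcongr
    _ = exp k := one_mul _

end SurvivalProcess

section Filtration

variable {Ω : Type*} {m0 : MeasurableSpace Ω} {P : Measure Ω} {ℱ : Filtration ℕ m0}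
  {X A : ℕ → Ω → ℝ}

theorem integrable_survivalProcess [IsFiniteMeasure P] (hX : Adapted ℱ X) (hA : Adapted ℱ A)
    (hbound : ∀ᵐ ω ∂P, ∀ j, X j ω ∈ Set.Icc 0 1 ∧ A j ω ≤ 1) (k : ℕ) :
    Integrable (survivalProcess X A k) P :=
  Integrable.of_bound
    ((adapted_survivalProcess hX hA k).mono (ℱ.le k) le_rfl).aestronglyMeasurable (exp k) <| by
      filter_upwards [hbound] with ω h
      rw [norm_eq_abs, abs_of_nonneg (survivalProcess_nonneg (fun j => (h j).1.2) k)]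
      exact survivalProcess_le_exp (fun j => (h j).1) (fun j => (h j).2) k

theorem supermartingale_survivalProcess [IsFiniteMeasure P] (hX : Adapted ℱ X)
    (hX_mem : ∀ j, ∀ᵐ ω ∂P, X j ω ∈ Set.Icc 0 1) :
    Supermartingale (survivalProcess X fun j => P[X j | ℱ (j - 1)]) ℱ P := by
  set A : ℕ → Ω → ℝ := fun j => P[X j | ℱ (j - 1)]
  have hXint : ∀ j, Integrable (X j) P := fun j =>
    Integrable.of_bound ((hX j).mono (ℱ.le j) le_rfl).aestronglyMeasurable 1 <| by
      filter_upwards [hX_mem j] with ω h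
      rw [norm_eq_abs, abs_le]
      constructor <;> linarith [h.1, h.2]
  have hA : Adapted ℱ A := fun j =>
    stronglyMeasurable_condExp.measurable.mono (ℱ.mono (Nat.sub_le j 1)) le_rfl
  have hW := adapted_survivalProcess hX hA
  have hbound : ∀ᵐ ω ∂P, ∀ j, X j ω ∈ Set.Icc 0 1 ∧ A j ω ≤ 1 := ae_all_iff.2 fun j =>
    (hX_mem j).and (condExp_le_one (ℱ.le _) (hXint j) ((hX_mem j).mono fun ω h => h.2))
  have hWint := integrable_survivalProcess hX hA hbound
  refine supermartingale_nat hW.stronglyAdapted hWint fun k => ?_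
  set G : Ω → ℝ := fun ω => survivalProcess X A k ω * exp (A (k + 1) ω)
  have hG : StronglyMeasurable[ℱ k] G :=
    ((hW k).mul (measurable_exp.comp stronglyMeasurable_condExp.measurable)).stronglyMeasurable
  have hsucc : survivalProcess X A (k + 1) = G * (1 - X (k + 1)) := by
    funext ω
    rw [survivalProcess_succ, Pi.mul_apply, Pi.sub_apply, Pi.one_apply]
    ring
  have hpull : P[G * (1 - X (k + 1)) | ℱ k] =ᵐ[P] G * P[1 - X (k + 1) | ℱ k] :=
    condExp_mul_of_stronglyMeasurable_left hG (hsucc ▸ hWint (k + 1))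
      ((integrable_const 1).sub (hXint (k + 1)))
  have hcomp : P[1 - X (k + 1) | ℱ k] =ᵐ[P] 1 - A (k + 1) := by
    refine (condExp_sub (integrable_const 1) (hXint (k + 1)) _).trans ?_
    rw [condExp_const (ℱ.le k)]
    rfl
  rw [hsucc]
  filter_upwards [hpull, hcomp, hbound] with ω hpullω hcompω hω
  rw [hpullω, Pi.mul_apply, hcompω, Pi.sub_apply, Pi.one_apply]
  calc G ω * (1 - A (k + 1) ω)
      = survivalProcess X A k ω * ((1 - A (k + 1) ω) * exp (A (k + 1) ω)) := by ring
    _ ≤ survivalProcess X A k ω * 1 :=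
      mul_le_mul_of_nonneg_left (one_sub_mul_exp_le_one _)
        (survivalProcess_nonneg (fun j => (hω j).1.2) k)
    _ = survivalProcess X A k ω := mul_one _

theorem measureReal_sum_lt_one_le_exp [IsProbabilityMeasure P] (hX : Adapted ℱ X)
    (hX01 : ∀ j, ∀ᵐ ω ∂P, X j ω = 0 ∨ X j ω = 1) {n : ℕ} {μ : ℝ}
    (hμ : ∀ᵐ ω ∂P, μ ≤ ∑ j ∈ Icc 1 n, P[X j | ℱ (j - 1)] ω) :
    P.real {ω | ∑ j ∈ Icc 1 n, X j ω < 1} ≤ exp (-μ) := by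
  set W := survivalProcess X fun j => P[X j | ℱ (j - 1)]
  have hX_mem : ∀ j, ∀ᵐ ω ∂P, X j ω ∈ Set.Icc 0 1 := fun j =>
    (hX01 j).mono fun ω h => by rcases h with h | h <;> simp [h]
  have hW := supermartingale_survivalProcess hX hX_mem
  have hWint : ∫ ω, W n ω ∂P ≤ 1 := by
    simpa [W, survivalProcess_zero] using hW.setIntegral_le (Nat.zero_le n) MeasurableSet.univ
  have hWnonneg : 0 ≤ᵐ[P] W n := by
    filter_upwards [ae_all_iff.2 hX_mem] with ω h using survivalProcess_nonneg (fun j => (h j).2) n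
  have hsub : {ω | ∑ j ∈ Icc 1 n, X j ω < 1} ≤ᵐ[P] {ω | exp μ ≤ W n ω} := by
    filter_upwards [ae_all_iff.2 hX01, hμ] with ω h01 hμω hlt
    have hprod : ∏ j ∈ Icc 1 n, (1 - X j ω) = 1 :=
      prod_one_sub_eq_one_of_sum_lt_one (fun j _ => h01 j) hlt
    change exp μ ≤ _ * _
    rw [hprod, one_mul]
    exact exp_le_exp.2 hμω
  have hmarkov := mul_meas_ge_le_integral_of_nonneg hWnonneg (hW.integrable n) (exp μ)
  calc P.real {ω | ∑ j ∈ Icc 1 n, X j ω < 1} ≤ P.real {ω | exp μ ≤ W n ω} :=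
        ENNReal.toReal_mono (measure_ne_top _ _) (measure_mono_ae hsub)
    _ ≤ exp (-μ) := by
        rw [exp_neg, inv_eq_one_div, le_div_iff₀' (exp_pos μ)]
        exact hmarkov.trans hWint

end Filtration

theorem stmt_0
    {Ω : Type*} {m0 : MeasurableSpace Ω} {P : Measure Ω} [IsProbabilityMeasure P]
    (n : ℕ) (ℱ : Filtration ℕ m0) (X : ℕ → Ω → ℝ)
    (hadapted : Adapted ℱ X)
    (hval : ∀ j, ∀ᵐ ω ∂P, X j ω = 0 ∨ X j ω = 1)
    (μ : ℝ) (hμ : 0 ≤ μ)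
    (hsum : ∀ᵐ ω ∂P, μ ≤ ∑ j ∈ Finset.Icc 1 n, (P[X j | ℱ (j-1)]) ω) :
    1 - Real.exp (-3 * μ / 8) ≤ (P {ω | 1 ≤ ∑ j ∈ Finset.Icc 1 n, X j ω}).toReal := by
  have hmeas : MeasurableSet {ω | ∑ j ∈ Icc 1 n, X j ω < 1} :=
    measurableSet_lt (measurable_fun_sum _ fun j _ => (hadapted j).mono (ℱ.le j) le_rfl)
      measurable_const
  have hcompl : {ω | 1 ≤ ∑ j ∈ Icc 1 n, X j ω} = {ω | ∑ j ∈ Icc 1 n, X j ω < 1}ᶜ := by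
    ext ω
    simp
  have hexp : exp (-μ) ≤ exp (-3 * μ / 8) := exp_le_exp.2 (by linarith)
  rw [← measureReal_def, hcompl, probReal_compl_eq_one_sub hmeas]
  linarith [measureReal_sum_lt_one_le_exp hadapted hval hsum]
end

section
/- Adaptive coin tossing lower bound: Suppose coins are tossed sequentially where the probability p_j of the j-th coin coming up heads may be chosen adaptively based on the outcomes of the first j-1 coins, subject to the constraint that on every outcome path ∑_{j=1}^n p_j ≥ μ. Then the probability that no coin comes up heads is at most (1 - μ/n)^n ≤ exp(-μ); in particular, among non-adaptive strategies, choosing p_j = μ/n for every j maximizes the probability of all tails. -/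
/-!
Let `B_k = μ - ∑_{j ≤ k} p_j` be the budget of head probability still owed after `k` tosses.
With `i` tosses left and budget `b`, no strategy makes all tails likelier than
`(1 - b⁺/i)^i`, the value of spreading the budget evenly. Hence
`∏_{j ≤ k} (1 - X_j) · (1 - B_k⁺/(n - k))^(n - k)` has non-increasing expectation: conditioning
on the first `k` tosses turns `1 - X_{k+1}` into `1 - p_{k+1}`, and the pointwise inequality
`(1 - p)(1 - (b - p)⁺/i)^i ≤ (1 - b⁺/(i + 1))^(i + 1)` is the two-valued AM-GM inequality,
which follows from Bernoulli's inequality. At `k = 0` the expectation is `(1 - μ/n)^n`, at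
`k = n` it is the probability of all tails. The non-adaptive bound is the same induction
without the expectations.
-/

open MeasureTheory Finset

/-- The budget `b` may be negative once more than the required head probability has been spent. -/
noncomputable def allTailsBound (i : ℕ) (b : ℝ) : ℝ := (1 - max b 0 / i) ^ i

@[simp]
lemma allTailsBound_zero_left (b : ℝ) : allTailsBound 0 b = 1 := pow_zero _

lemma allTailsBound_of_nonneg {i : ℕ} {b : ℝ} (hb : 0 ≤ b) :
    allTailsBound i b = (1 - b / i) ^ i := by
  rw [allTailsBound, max_eq_left hb]

lemma allTailsBound_of_nonpos {i : ℕ} {b : ℝ} (hb : b ≤ 0) : allTailsBound i b = 1 := by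
  rw [allTailsBound, max_eq_right hb, zero_div, sub_zero, one_pow]

lemma continuous_allTailsBound (i : ℕ) : Continuous (allTailsBound i) := by
  unfold allTailsBound; fun_prop

lemma allTailsBound_mem_unitInterval {i : ℕ} {b : ℝ} (hb : b ≤ i) :
    allTailsBound i b ∈ unitInterval := by
  rcases Nat.eq_zero_or_pos i with rfl | hi
  · simp
  have hi : (0 : ℝ) < i := by exact_mod_cast hi
  have h0 : 0 ≤ 1 - max b 0 / i := sub_nonneg.2 <| (div_le_one hi).2 (max_le hb hi.le)
  have h1 : 1 - max b 0 / i ≤ 1 := sub_le_self _ <| div_nonneg (le_max_right _ _) hi.le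
  exact ⟨pow_nonneg h0 i, pow_le_one₀ h0 h1⟩

/-- Bernoulli's inequality for `(x + i a) / ((i + 1) a) = 1 + t`. -/
lemma mul_pow_le_add_mul_div_pow {x a : ℝ} (hx : 0 ≤ x) (ha : 0 ≤ a) (i : ℕ) :
    x * a ^ i ≤ ((x + i * a) / (i + 1)) ^ (i + 1) := by
  rcases ha.eq_or_lt with rfl | ha
  · rcases Nat.eq_zero_or_pos i with rfl | hi
    · simp
    · rw [zero_pow hi.ne', mul_zero]; positivity
  set t := (x - a) / ((i + 1) * a)
  have ht : -2 ≤ t := by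
    rw [le_div_iff₀ (by positivity)]; nlinarith
  have hmean : (x + i * a) / (i + 1) = a * (1 + t) := by
    simp only [t]; field_simp; ring
  have hbern := one_add_mul_le_pow ht (i + 1)
  have hxa : 1 + ((i + 1 : ℕ) : ℝ) * t = x / a := by
    simp only [t]; push_cast; field_simp; ring
  rw [hxa] at hbern
  calc x * a ^ i = (x / a * a) * a ^ i := by rw [div_mul_cancel₀ x ha.ne']
    _ ≤ ((1 + t) ^ (i + 1) * a) * a ^ i := by gcongr
    _ = ((x + i * a) / (i + 1)) ^ (i + 1) := by rw [hmean, mul_pow]; ring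

lemma one_sub_mul_allTailsBound_le {i : ℕ} {p b : ℝ} (hp0 : 0 ≤ p) (hp1 : p ≤ 1)
    (hb : b - p ≤ i) : (1 - p) * allTailsBound i (b - p) ≤ allTailsBound (i + 1) b := by
  rcases le_or_gt (b - p) 0 with hbp | hbp
  · rw [allTailsBound_of_nonpos hbp, mul_one]
    set c := max b 0
    have hcp : c ≤ p := max_le (by linarith) hp0
    have hc : c / (i + 1 : ℕ) ≤ 1 := (div_le_one (by positivity)).2 (by push_cast; linarith)
    calc 1 - p ≤ 1 + ((i + 1 : ℕ) : ℝ) * -(c / (i + 1 : ℕ)) := by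
          rw [mul_neg, mul_div_cancel₀ _ (by positivity)]; linarith
      _ ≤ (1 + -(c / (i + 1 : ℕ))) ^ (i + 1) := one_add_mul_le_pow (by linarith) (i + 1)
      _ = allTailsBound (i + 1) b := by rw [allTailsBound, ← sub_eq_add_neg]
  · have hi : (0 : ℝ) < i := hbp.trans_le hb
    have hb0 : 0 ≤ b := by linarith
    rw [allTailsBound_of_nonneg hbp.le, allTailsBound_of_nonneg hb0]
    have key := mul_pow_le_add_mul_div_pow (x := 1 - p) (a := 1 - (b - p) / i) (by linarith)
      (sub_nonneg.2 <| (div_le_one hi).2 hb) i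
    convert key using 2
    push_cast; field_simp; ring

lemma prod_one_sub_le_allTailsBound (q : ℕ → ℝ) (hq : ∀ j, 0 ≤ q j ∧ q j ≤ 1) (n : ℕ) :
    ∏ j ∈ Icc 1 n, (1 - q j) ≤ allTailsBound n (∑ j ∈ Icc 1 n, q j) := by
  induction n with
  | zero => simp
  | succ n ih =>
    have hsum : ∑ j ∈ Icc 1 n, q j ≤ n := by
      simpa using Finset.sum_le_card_nsmul (Icc 1 n) q 1 fun j _ => (hq j).2
    rw [prod_Icc_succ_top (by omega), sum_Icc_succ_top (by omega), mul_comm]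
    calc (1 - q (n + 1)) * ∏ j ∈ Icc 1 n, (1 - q j)
        ≤ (1 - q (n + 1)) * allTailsBound n (∑ j ∈ Icc 1 n, q j) :=
          mul_le_mul_of_nonneg_left ih (sub_nonneg.2 (hq _).2)
      _ ≤ _ := by
          simpa using one_sub_mul_allTailsBound_le (hq (n + 1)).1 (hq (n + 1)).2
            (b := ∑ j ∈ Icc 1 n, q j + q (n + 1)) (by simpa using hsum)

lemma sub_sum_Icc_le_of_le_sum {f : ℕ → ℝ} (hf : ∀ j, f j ≤ 1) {μ : ℝ} {n k : ℕ}
    (hμ : μ ≤ ∑ j ∈ Icc 1 n, f j) (hk : k ≤ n) : μ - ∑ j ∈ Icc 1 k, f j ≤ (n - k : ℕ) := by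
  have hIoc (m : ℕ) : Icc 1 m = Ioc 0 m := Icc_add_one_left_eq_Ioc 0 m
  have htail : ∑ j ∈ Ioc k n, f j ≤ (n - k : ℕ) := by
    simpa using sum_le_card_nsmul (Ioc k n) f 1 fun j _ => hf j
  rw [hIoc] at hμ ⊢
  linarith [sum_Ioc_consecutive f k.zero_le hk]

lemma prod_one_sub_eq_indicator {ι : Type*} (s : Finset ι) {x : ι → ℝ}
    (hx : ∀ j ∈ s, x j = 0 ∨ x j = 1) :
    ∏ j ∈ s, (1 - x j) = if ∑ j ∈ s, x j = 0 then 1 else 0 := by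
  have hx0 : ∀ j ∈ s, 0 ≤ x j := fun j hj => by rcases hx j hj with h | h <;> simp [h]
  split_ifs with h
  · rw [sum_eq_zero_iff_of_nonneg hx0] at h
    exact prod_eq_one fun j hj => by simp [h j hj]
  · obtain ⟨j, hj, hxj⟩ := exists_ne_zero_of_sum_ne_zero h
    exact prod_eq_zero hj (by simp [(hx j hj).resolve_left hxj])

lemma norm_le_one_of_mem_unitInterval {x : ℝ} (hx : x ∈ unitInterval) : ‖x‖ ≤ 1 :=
  abs_le.2 ⟨by linarith [hx.1], hx.2⟩

lemma integrable_of_mem_unitInterval {Ω : Type*} {m0 : MeasurableSpace Ω} {P : Measure Ω}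
    [IsFiniteMeasure P] {f : Ω → ℝ} (hf : AEStronglyMeasurable f P)
    (hf01 : ∀ᵐ ω ∂P, f ω ∈ unitInterval) : Integrable f P :=
  .of_bound hf 1 <| hf01.mono fun _ => norm_le_one_of_mem_unitInterval

section ConditionalExpectation

variable {Ω : Type*} {m m0 : MeasurableSpace Ω} {P : Measure Ω} [IsFiniteMeasure P]

lemma integral_mul_condExp_of_bound (hm : m ≤ m0) {g f : Ω → ℝ} {c : ℝ}
    (hg : StronglyMeasurable[m] g) (hg_bound : ∀ᵐ ω ∂P, ‖g ω‖ ≤ c) (hf : Integrable f P) :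
    ∫ ω, g ω * P[f | m] ω ∂P = ∫ ω, g ω * f ω ∂P :=
  (integral_congr_ae (condExp_stronglyMeasurable_mul_of_bound hm hg hf c hg_bound).symm).trans
    (integral_condExp hm)

lemma condExp_mem_unitInterval {f : Ω → ℝ} (hf : ∀ᵐ ω ∂P, f ω ∈ unitInterval)
    (hfi : Integrable f P) : ∀ᵐ ω ∂P, P[f | m] ω ∈ unitInterval := by
  by_cases hm : m ≤ m0
  · have h0 : 0 ≤ᵐ[P] P[f | m] := condExp_nonneg (hf.mono fun _ h => h.1)
    have h1 : P[f | m] ≤ᵐ[P] P[fun _ => (1 : ℝ) | m] :=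
      condExp_mono hfi (integrable_const 1) (hf.mono fun _ h => h.2)
    rw [condExp_const hm] at h1
    filter_upwards [h0, h1] with ω h0 h1 using ⟨h0, h1⟩
  · simp [condExp_of_not_le hm]

/-- One toss: `T` is the weight of the earlier tosses, `Y` the current toss, and `B` the budget
left after it; conditioning on `m` replaces `1 - Y` by `1 - P[Y | m]`. -/
lemma integral_mul_one_sub_mul_allTailsBound_le (hm : m ≤ m0) {i : ℕ} {T B Y : Ω → ℝ}
    (hT : StronglyMeasurable[m] T) (hB : StronglyMeasurable[m] B) (hY : Integrable Y P)
    (hT01 : ∀ᵐ ω ∂P, T ω ∈ unitInterval) (hY01 : ∀ᵐ ω ∂P, Y ω ∈ unitInterval)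
    (hBi : ∀ᵐ ω ∂P, B ω ≤ i) :
    ∫ ω, T ω * (1 - Y ω) * allTailsBound i (B ω) ∂P ≤
      ∫ ω, T ω * allTailsBound (i + 1) (B ω + P[Y | m] ω) ∂P := by
  set G : Ω → ℝ := fun ω => T ω * allTailsBound i (B ω)
  have hG : StronglyMeasurable[m] G :=
    hT.mul ((continuous_allTailsBound i).comp_stronglyMeasurable hB)
  have hG1 : ∀ᵐ ω ∂P, ‖G ω‖ ≤ 1 := by
    filter_upwards [hT01, hBi] with ω hT hB
    exact norm_le_one_of_mem_unitInterval <|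
      unitInterval.mul_mem hT (allTailsBound_mem_unitInterval hB)
  have hq01 := condExp_mem_unitInterval (m := m) hY01 hY
  have hcond : P[fun ω => 1 - Y ω | m] =ᵐ[P] fun ω => 1 - P[Y | m] ω := by
    have h := condExp_sub (m := m) (integrable_const (μ := P) (1 : ℝ)) hY
    rwa [condExp_const hm] at h
  have hRHS : Integrable (fun ω => T ω * allTailsBound (i + 1) (B ω + P[Y | m] ω)) P := by
    have hV := (continuous_allTailsBound (i + 1)).comp_stronglyMeasurable
      (hB.add (stronglyMeasurable_condExp (m := m) (f := Y) (μ := P)))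
    refine integrable_of_mem_unitInterval ((hT.mul hV).mono hm).aestronglyMeasurable ?_
    filter_upwards [hT01, hq01, hBi] with ω hT hq hB
    exact unitInterval.mul_mem hT (allTailsBound_mem_unitInterval (by push_cast; linarith [hq.2]))
  calc ∫ ω, T ω * (1 - Y ω) * allTailsBound i (B ω) ∂P
      = ∫ ω, G ω * P[fun ω => 1 - Y ω | m] ω ∂P := by
        rw [integral_mul_condExp_of_bound hm hG hG1 (f := fun ω => 1 - Y ω)
          ((integrable_const 1).sub hY)]
        simp only [G, mul_right_comm]
    _ ≤ ∫ ω, T ω * allTailsBound (i + 1) (B ω + P[Y | m] ω) ∂P := by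
      refine integral_mono_ae (integrable_condExp.bdd_mul (hG.mono hm).aestronglyMeasurable hG1)
        hRHS ?_
      filter_upwards [hT01, hq01, hBi, hcond] with ω hT hq hB hc
      have key := one_sub_mul_allTailsBound_le hq.1 hq.2 (b := B ω + P[Y | m] ω)
        (by rwa [add_sub_cancel_right])
      rw [add_sub_cancel_right] at key
      calc G ω * P[fun ω => 1 - Y ω | m] ω
          = T ω * ((1 - P[Y | m] ω) * allTailsBound i (B ω)) := by rw [hc]; ring
        _ ≤ _ := mul_le_mul_of_nonneg_left key hT.1

end ConditionalExpectation

section AdaptiveTosses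

variable {Ω : Type*} {m0 : MeasurableSpace Ω} {P : Measure Ω} {ℱ : Filtration ℕ m0}
  {X : ℕ → Ω → ℝ}

lemma stronglyMeasurable_prod_one_sub (hadapted : StronglyAdapted ℱ X) (k : ℕ) :
    StronglyMeasurable[ℱ k] fun ω => ∏ j ∈ Icc 1 k, (1 - X j ω) :=
  Finset.stronglyMeasurable_fun_prod _ fun j hj =>
    stronglyMeasurable_const.sub ((hadapted j).mono (ℱ.mono (mem_Icc.1 hj).2))

lemma stronglyMeasurable_sum_condExp (k : ℕ) :
    StronglyMeasurable[ℱ k] fun ω => ∑ j ∈ Icc 1 (k + 1), P[X j | ℱ (j - 1)] ω :=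
  Finset.stronglyMeasurable_fun_sum _ fun j hj =>
    stronglyMeasurable_condExp.mono (ℱ.mono (by grind))

theorem integral_prod_one_sub_le_allTailsBound [IsProbabilityMeasure P]
    (hadapted : StronglyAdapted ℱ X) (hX : ∀ j, ∀ᵐ ω ∂P, X j ω ∈ unitInterval) {μ : ℝ} {n : ℕ}
    (hsum : ∀ᵐ ω ∂P, μ ≤ ∑ j ∈ Icc 1 n, P[X j | ℱ (j - 1)] ω) :
    ∫ ω, ∏ j ∈ Icc 1 n, (1 - X j ω) ∂P ≤ allTailsBound n μ := by
  set tails : ℕ → Ω → ℝ := fun k ω => ∏ j ∈ Icc 1 k, (1 - X j ω)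
  set budget : ℕ → Ω → ℝ := fun k ω => μ - ∑ j ∈ Icc 1 k, P[X j | ℱ (j - 1)] ω
  have hXi : ∀ j, Integrable (X j) P := fun j =>
    integrable_of_mem_unitInterval ((hadapted j).mono (ℱ.le j)).aestronglyMeasurable (hX j)
  have htails : ∀ k, ∀ᵐ ω ∂P, tails k ω ∈ unitInterval := fun k => by
    filter_upwards [ae_all_iff.2 hX] with ω hω
    exact unitInterval.prod_mem fun j _ => Set.Icc.one_sub_mem (hω j)
  have hbudget : ∀ k ≤ n, ∀ᵐ ω ∂P, budget k ω ≤ (n - k : ℕ) := fun k hk => by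
    filter_upwards [hsum, ae_all_iff.2 fun j => condExp_mem_unitInterval (hX j) (hXi j)]
      with ω hω hp
    exact sub_sum_Icc_le_of_le_sum (fun j => (hp j).2) hω hk
  have hstep : ∀ k < n, ∫ ω, tails (k + 1) ω * allTailsBound (n - (k + 1)) (budget (k + 1) ω) ∂P
      ≤ ∫ ω, tails k ω * allTailsBound (n - k) (budget k ω) ∂P := fun k hk => by
    have htails_succ : ∀ ω, tails (k + 1) ω = tails k ω * (1 - X (k + 1) ω) := fun ω =>
      prod_Icc_succ_top (by omega) _
    have hbudget_succ : ∀ ω, budget (k + 1) ω + P[X (k + 1) | ℱ k] ω = budget k ω := fun ω => by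
      simp only [budget, sum_Icc_succ_top (by omega : 1 ≤ k + 1), Nat.add_sub_cancel]
      ring
    have h := integral_mul_one_sub_mul_allTailsBound_le (ℱ.le k) (T := tails k)
      (B := budget (k + 1)) (stronglyMeasurable_prod_one_sub hadapted k)
      (stronglyMeasurable_const.sub (stronglyMeasurable_sum_condExp k)) (hXi (k + 1))
      (htails k) (hX (k + 1)) (hbudget (k + 1) hk)
    rw [show n - k = n - (k + 1) + 1 by omega]
    simpa only [htails_succ, hbudget_succ] using h
  have hchain : ∀ k ≤ n, ∫ ω, tails k ω * allTailsBound (n - k) (budget k ω) ∂P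
      ≤ allTailsBound n μ := by
    intro k hk
    induction k with
    | zero => simp [tails, budget]
    | succ k ih => exact (hstep k hk).trans (ih (by omega))
  simpa [tails] using hchain n le_rfl

end AdaptiveTosses

theorem stmt_2_general
    {Ω : Type*} {m0 : MeasurableSpace Ω} {P : Measure Ω} [IsProbabilityMeasure P]
    (n : ℕ) (ℱ : Filtration ℕ m0) (X : ℕ → Ω → ℝ)
    (hadapted : StronglyAdapted ℱ X)
    (hval : ∀ j, ∀ᵐ ω ∂P, X j ω = 0 ∨ X j ω = 1)
    (μ : ℝ) (hμ0 : 0 ≤ μ) (hμn : μ ≤ n)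
    (hsum : ∀ᵐ ω ∂P, μ ≤ ∑ j ∈ Finset.Icc 1 n, (P[X j | ℱ (j-1)]) ω) :
    ((P {ω | ∑ j ∈ Finset.Icc 1 n, X j ω = 0}).toReal ≤ (1 - μ/n)^n)
    ∧ (1 - μ/n)^n ≤ Real.exp (-μ)
    ∧ (∀ q : ℕ → ℝ, (∀ j, 0 ≤ q j ∧ q j ≤ 1) → ∑ j ∈ Finset.Icc 1 n, q j = μ →
        ∏ j ∈ Finset.Icc 1 n, (1 - q j) ≤ (1 - μ/n)^n) := by
  have hX : ∀ j, ∀ᵐ ω ∂P, X j ω ∈ unitInterval := fun j =>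
    (hval j).mono fun ω h => by rcases h with h | h <;> simp [h]
  have hS : MeasurableSet {ω | ∑ j ∈ Icc 1 n, X j ω = 0} :=
    Finset.measurable_fun_sum _ (fun j _ => ((hadapted j).mono (ℱ.le j)).measurable)
      (measurableSet_singleton 0)
  have hallTails : P.real {ω | ∑ j ∈ Icc 1 n, X j ω = 0} = ∫ ω, ∏ j ∈ Icc 1 n, (1 - X j ω) ∂P := by
    rw [← integral_indicator_one hS]
    refine integral_congr_ae ?_
    filter_upwards [ae_all_iff.2 hval] with ω hω
    simp [Set.indicator_apply, prod_one_sub_eq_indicator _ fun j _ => hω j]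
  rw [← allTailsBound_of_nonneg hμ0]
  refine ⟨?_, allTailsBound_of_nonneg hμ0 ▸ Real.one_sub_div_pow_le_exp_neg hμn, fun q hq hqμ => ?_⟩
  · exact hallTails.trans_le (integral_prod_one_sub_le_allTailsBound hadapted hX hsum)
  · exact hqμ ▸ prod_one_sub_le_allTailsBound q hq n

theorem stmt_2
    {Ω : Type*} {m0 : MeasurableSpace Ω} {P : Measure Ω} [IsProbabilityMeasure P]
    (n : ℕ) (hn : 0 < n) (ℱ : Filtration ℕ m0) (X : ℕ → Ω → ℝ)
    (hadapted : StronglyAdapted ℱ X)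
    (hval : ∀ j, ∀ᵐ ω ∂P, X j ω = 0 ∨ X j ω = 1)
    (μ : ℝ) (hμ0 : 0 ≤ μ) (hμn : μ ≤ n)
    (hsum : ∀ᵐ ω ∂P, μ ≤ ∑ j ∈ Finset.Icc 1 n, (P[X j | ℱ (j-1)]) ω) :
    ((P {ω | ∑ j ∈ Finset.Icc 1 n, X j ω = 0}).toReal ≤ (1 - μ/n)^n)
    ∧ (1 - μ/n)^n ≤ Real.exp (-μ)
    ∧ (∀ q : ℕ → ℝ, (∀ j, 0 ≤ q j ∧ q j ≤ 1) → ∑ j ∈ Finset.Icc 1 n, q j = μ →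
        ∏ j ∈ Finset.Icc 1 n, (1 - q j) ≤ (1 - μ/n)^n) :=
  stmt_2_general n ℱ X hadapted hval μ hμ0 hμn hsum
end

section
/- Doubling recursion bound: Let β > 1 and suppose (u_i)_{i≥0} is a sequence in [0,1] with u_0 = 1 and u_i ≤ u_{i-1}/β² + 1[E ≥ β^i/c₁] for all i ≥ 1, where E ≥ 1 and c₁ > 0 are constants. Then ∑_{i≥1} u_i·β^i ≤ (β/(β-1))·(1/β + (c₁β²/(β-1))·E), and consequently the total expected cost (β-1)·∑_{i≥0} u_i·β^i is at most a constant (depending only on β, c₁) times E. -/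
/-!
With `a i = u i * β ^ i` the recursion reads `a (i + 1) ≤ a i / β + β ^ (i + 1) * 1[β ^ (i + 1) ≤ c₁ E]`.
Summing, the partial sums `S` of the tail satisfy `S ≤ (1 + S) / β + ∑_{β ^ j ≤ c₁ E} β ^ j`, and this
geometric sum is at most `β c₁ E / (β - 1)` since its largest term is at most `c₁ E`. Solving for `S`
bounds the tail; adding `a 0 = 1` bounds the whole series.
-/

open Finset

section DoublingRecursion

variable {β : ℝ}

lemma mul_indicator_le_sub_min (hβ : 1 < β) {x D : ℝ} (hx : 0 ≤ x) :
    x * (if x ≤ D then 1 else 0) ≤ (min (β * x) (β * D) - min x (β * D)) / (β - 1) := by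
  have hβ1 : 0 < β - 1 := sub_pos.mpr hβ
  split_ifs with hxD
  · rw [min_eq_left (by nlinarith), min_eq_left (by nlinarith), le_div_iff₀ hβ1]
    linarith
  · rw [mul_zero]
    exact div_nonneg (sub_nonneg.mpr (min_le_min_right _ (by nlinarith))) hβ1.le

/-- `min (β ^ (j + 1)) (β * D)` grows by `(β - 1) * β ^ (j + 1)` while `β ^ (j + 1) ≤ D`
and never decreases, so the sum telescopes. -/
lemma sum_range_pow_succ_mul_indicator_le (hβ : 1 < β) {D : ℝ} (hD : 0 ≤ D) (n : ℕ) :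
    ∑ i ∈ range n, β ^ (i + 1) * (if β ^ (i + 1) ≤ D then 1 else 0) ≤ β * D / (β - 1) := by
  have hβ1 : 0 < β - 1 := sub_pos.mpr hβ
  set g : ℕ → ℝ := fun j ↦ min (β ^ (j + 1)) (β * D)
  calc ∑ i ∈ range n, β ^ (i + 1) * (if β ^ (i + 1) ≤ D then 1 else 0)
      ≤ ∑ i ∈ range n, (g (i + 1) - g i) / (β - 1) := by
        gcongr with i
        simp only [g, pow_succ' β (i + 1)]
        exact mul_indicator_le_sub_min hβ (by positivity)
    _ = (g n - g 0) / (β - 1) := by rw [← sum_div, sum_range_sub]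
    _ ≤ β * D / (β - 1) := by
        gcongr
        have : 0 ≤ g 0 := le_min (by positivity) (by positivity)
        linarith [min_le_right (β ^ (n + 1)) (β * D)]

lemma sum_range_succ_le_of_le_div_add {a b : ℕ → ℝ} {B : ℝ} (hβ : 1 < β) (ha : ∀ i, 0 ≤ a i)
    (hrec : ∀ i, a (i + 1) ≤ a i / β + b i) (hb : ∀ n, ∑ i ∈ range n, b i ≤ B) (n : ℕ) :
    ∑ i ∈ range n, a (i + 1) ≤ (a 0 + β * B) / (β - 1) := by
  set S := ∑ i ∈ range n, a (i + 1)
  have hshift : ∑ i ∈ range n, a i ≤ a 0 + S := by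
    linarith [sum_range_succ' a n, sum_range_succ a n, ha n]
  have hS : S ≤ (a 0 + S) / β + B := calc
    S ≤ ∑ i ∈ range n, (a i / β + b i) := sum_le_sum fun i _ ↦ hrec i
    _ = (∑ i ∈ range n, a i) / β + ∑ i ∈ range n, b i := by rw [sum_add_distrib, sum_div]
    _ ≤ (a 0 + S) / β + B := add_le_add (by gcongr) (hb n)
  rw [div_add' _ _ _ (by positivity), le_div_iff₀ (by positivity)] at hS
  rw [le_div_iff₀ (by linarith)]
  linarith

lemma sum_range_mul_pow_succ_le {u : ℕ → ℝ} {D : ℝ} (hβ : 1 < β) (hD : 0 ≤ D) (hu : ∀ i, 0 ≤ u i)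
    (hrec : ∀ i, u (i + 1) ≤ u i / β ^ 2 + if β ^ (i + 1) ≤ D then 1 else 0) (n : ℕ) :
    ∑ i ∈ range n, u (i + 1) * β ^ (i + 1) ≤ (u 0 + β ^ 2 * D / (β - 1)) / (β - 1) := by
  have hstep (i : ℕ) : u (i + 1) * β ^ (i + 1) ≤
      u i * β ^ i / β + β ^ (i + 1) * (if β ^ (i + 1) ≤ D then 1 else 0) := calc
    _ ≤ (u i / β ^ 2 + if β ^ (i + 1) ≤ D then 1 else 0) * β ^ (i + 1) := by gcongr; exact hrec i
    _ = _ := by field_simp; ring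
  refine (sum_range_succ_le_of_le_div_add hβ (fun i ↦ mul_nonneg (hu i) (by positivity)) hstep
    (sum_range_pow_succ_mul_indicator_le hβ hD) n).trans_eq ?_
  ring

lemma tsum_mul_pow_succ_le {u : ℕ → ℝ} {D : ℝ} (hβ : 1 < β) (hD : 0 ≤ D) (hu : ∀ i, 0 ≤ u i)
    (hrec : ∀ i, u (i + 1) ≤ u i / β ^ 2 + if β ^ (i + 1) ≤ D then 1 else 0) :
    ∑' i, u (i + 1) * β ^ (i + 1) ≤ (u 0 + β ^ 2 * D / (β - 1)) / (β - 1) :=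
  Real.tsum_le_of_sum_range_le (fun i ↦ mul_nonneg (hu _) (by positivity))
    (sum_range_mul_pow_succ_le hβ hD hu hrec)

lemma tsum_mul_pow_le {u : ℕ → ℝ} {D : ℝ} (hβ : 1 < β) (hD : 0 ≤ D) (hu : ∀ i, 0 ≤ u i)
    (hrec : ∀ i, u (i + 1) ≤ u i / β ^ 2 + if β ^ (i + 1) ≤ D then 1 else 0) :
    ∑' i, u i * β ^ i ≤ u 0 + (u 0 + β ^ 2 * D / (β - 1)) / (β - 1) := by
  have hβ1 : 0 < β - 1 := sub_pos.mpr hβ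
  refine Real.tsum_le_of_sum_range_le (fun i ↦ mul_nonneg (hu i) (by positivity)) fun
    | 0 => by rw [sum_range_zero]; have := hu 0; positivity
    | n + 1 => ?_
  rw [sum_range_succ', pow_zero, mul_one, add_comm]
  gcongr
  exact sum_range_mul_pow_succ_le hβ hD hu hrec n

end DoublingRecursion

theorem stmt_9 (β c₁ E : ℝ) (hβ : 1 < β) (hc : 0 < c₁) (hE : 1 ≤ E)
    (u : ℕ → ℝ) (hu01 : ∀ i, u i ∈ Set.Icc (0:ℝ) 1) (hu0 : u 0 = 1)
    (hrec : ∀ i : ℕ, 1 ≤ i → u i ≤ u (i-1)/β^2 + (if β^i/c₁ ≤ E then 1 else 0)) :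
    (∑' i : ℕ, u (i+1) * β^(i+1) ≤ (β/(β-1)) * (1/β + (c₁ * β^2/(β-1)) * E))
    ∧ (β-1) * ∑' i : ℕ, u i * β^i ≤ (β + c₁ * β^3/(β-1)) * E := by
  have hβ1 : 0 < β - 1 := sub_pos.mpr hβ
  have hu (i : ℕ) : 0 ≤ u i := (hu01 i).1
  have hrec_succ (i : ℕ) : u (i + 1) ≤ u i / β ^ 2 + if β ^ (i + 1) ≤ c₁ * E then 1 else 0 := by
    simpa only [← div_le_iff₀' hc, Nat.add_sub_cancel] using hrec (i + 1) (by omega)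
  have hD : 0 ≤ c₁ * E := by positivity
  have htail := tsum_mul_pow_succ_le hβ hD hu hrec_succ
  have hfull := tsum_mul_pow_le hβ hD hu hrec_succ
  rw [hu0] at htail hfull
  constructor
  · calc _ ≤ (1 + β ^ 2 * (c₁ * E) / (β - 1)) / (β - 1) := htail
      _ ≤ (1 + β ^ 2 * (c₁ * E) / (β - 1)) / (β - 1) + c₁ * E * β ^ 2 / (β - 1) :=
        le_add_of_nonneg_right (by positivity)
      _ = _ := by field_simp; ring
  · calc (β - 1) * ∑' i, u i * β ^ i
        ≤ (β - 1) * (1 + (1 + β ^ 2 * (c₁ * E) / (β - 1)) / (β - 1)) := by gcongr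
      _ = β + c₁ * β ^ 2 / (β - 1) * E := by field_simp; ring
      _ ≤ β * E + c₁ * β ^ 3 / (β - 1) * E := by
        gcongr
        · exact le_mul_of_one_le_right (by positivity) hE
        · exact hβ.le
        · norm_num
      _ = (β + c₁ * β ^ 3 / (β - 1)) * E := by ring
end
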